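/- Every EZ-Reedy category is elegant: if C is a Reedy category such that every map in C⁻ has a section, and two maps σ, σ': c → d in C⁻ with the same set of sections are equal, then every point of every presheaf on C is uniquely a degeneracy of a unique non-degenerate point. -/

import Mathlib

/-!
Existence is an induction on degree: a non-identity map of `C⁻` strictly lowers the degree.
For uniqueness the key observation is that if `f^* y' = y` with `y` non-degenerate, then `f`
lies in `C⁺`, since its `C⁻`-factor would exhibit `y` as degenerate. So if `σ^* y = σ'^* y'`
with `y`, `y'` non-degenerate and `β` is a section of `σ`, then `y = β^* σ'^* y'` forces
`β ≫ σ' ∈ C⁺`; symmetrically for a section of `σ'`, so `d = d'` by degree, and then every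
section of `σ` is a section of `σ'` (and vice versa) because `C⁺` has no non-identity
endomorphisms. Now (EZ2) gives `σ = σ'`, and `y = β^* x = y'`.
-/

open CategoryTheory CategoryTheory.Limits Opposite

universe v u

/-- A Reedy category structure on a category `C`: wide subcategories `plus` (direct) and
`minus` (inverse) together with a degree function, satisfying unique factorization and
the degree conditions. -/
structure ReedyStruct (C : Type u) [Category.{v} C] where
  plus : MorphismProperty C
  minus : MorphismProperty C
  deg : C → ℕ
  plus_id : ∀ c : C, plus (𝟙 c)
  minus_id : ∀ c : C, minus (𝟙 c)
  plus_comp : ∀ {a b c : C} (f : a ⟶ b) (g : b ⟶ c), plus f → plus g → plus (f ≫ g)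
  minus_comp : ∀ {a b c : C} (f : a ⟶ b) (g : b ⟶ c), minus f → minus g → minus (f ≫ g)
  fact_exists : ∀ {a b : C} (f : a ⟶ b), ∃ (e : C) (g : a ⟶ e) (h : e ⟶ b),
    minus g ∧ plus h ∧ g ≫ h = f
  fact_unique : ∀ {a b e e' : C} (g : a ⟶ e) (h : e ⟶ b) (g' : a ⟶ e') (h' : e' ⟶ b),
    minus g → plus h → minus g' → plus h' → g ≫ h = g' ≫ h' →
    ∃ w : e = e', g ≫ eqToHom w = g' ∧ eqToHom w ≫ h' = h
  plus_deg : ∀ {a b : C} (f : a ⟶ b), plus f → deg a ≤ deg b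
  minus_deg : ∀ {a b : C} (f : a ⟶ b), minus f → deg b ≤ deg a
  plus_deg_eq : ∀ {a b : C} (f : a ⟶ b), plus f → deg a = deg b → ∃ w : a = b, f = eqToHom w
  minus_deg_eq : ∀ {a b : C} (f : a ⟶ b), minus f → deg a = deg b → ∃ w : a = b, f = eqToHom w

variable {C : Type} [SmallCategory C]

/-- A `c`-point `x ∈ X(c)` of a presheaf is degenerate if it is the image of some point
under a non-identity map of `C⁻`. -/
def Degenerate (R : ReedyStruct C) (X : Cᵒᵖ ⥤ Type) {c : C} (x : X.obj (op c)) : Prop :=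
  ∃ (d : C) (σ : c ⟶ d) (y : X.obj (op d)),
    R.minus σ ∧ (¬ ∃ w : c = d, σ = eqToHom w) ∧ X.map σ.op y = x

/-- A Reedy category is elegant if every point of every presheaf is uniquely a degeneracy
of a unique non-degenerate point. -/
def Elegant (R : ReedyStruct C) : Prop :=
  ∀ (X : Cᵒᵖ ⥤ Type) (c : C) (x : X.obj (op c)),
    ∃! p : Σ d : C, (c ⟶ d) × X.obj (op d),
      R.minus p.2.1 ∧ ¬ Degenerate R X p.2.2 ∧ X.map p.2.1.op p.2.2 = x

lemma map_map_of_section_apply {X : Cᵒᵖ ⥤ Type} {c d : C} {σ : c ⟶ d} {β : d ⟶ c}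
    (hβ : β ≫ σ = 𝟙 d) (y : X.obj (op d)) : X.map β.op (X.map σ.op y) = y := by
  rw [← Functor.map_comp_apply, ← op_comp, hβ, op_id, Functor.map_id_apply]

namespace ReedyStruct

variable (R : ReedyStruct C)

lemma deg_lt_of_minus {c d : C} {σ : c ⟶ d} (hσ : R.minus σ)
    (hne : ¬ ∃ w : c = d, σ = eqToHom w) : R.deg d < R.deg c :=
  (R.minus_deg σ hσ).lt_of_ne fun h => hne (R.minus_deg_eq σ hσ h.symm)

lemma eq_of_plus_of_plus {a b : C} {f : a ⟶ b} {g : b ⟶ a} (hf : R.plus f) (hg : R.plus g) :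
    a = b :=
  (R.plus_deg_eq f hf (le_antisymm (R.plus_deg f hf) (R.plus_deg g hg))).1

lemma eq_id_of_plus {a : C} {f : a ⟶ a} (hf : R.plus f) : f = 𝟙 a := by
  obtain ⟨_, rfl⟩ := R.plus_deg_eq f hf rfl
  rfl

variable {R} {X : Cᵒᵖ ⥤ Type}

lemma exists_minus_not_degenerate {c : C} (x : X.obj (op c)) :
    ∃ (d : C) (σ : c ⟶ d) (y : X.obj (op d)),
      R.minus σ ∧ ¬ Degenerate R X y ∧ X.map σ.op y = x := by
  induction hn : R.deg c using Nat.strong_induction_on generalizing c with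
  | _ n ih =>
  by_cases hx : Degenerate R X x
  · obtain ⟨d, σ, y, hσ, hne, rfl⟩ := hx
    obtain ⟨e, τ, z, hτ, hz, rfl⟩ := ih _ (hn ▸ R.deg_lt_of_minus hσ hne) y rfl
    exact ⟨e, σ ≫ τ, z, R.minus_comp σ τ hσ hτ, hz, Functor.map_comp_apply X _ _ z⟩
  · exact ⟨c, 𝟙 c, x, R.minus_id c, hx, Functor.map_id_apply X _ x⟩

lemma plus_of_map_apply_eq_not_degenerate {d d' : C} {y : X.obj (op d)} {y' : X.obj (op d')}
    (hy : ¬ Degenerate R X y) {f : d ⟶ d'} (hf : X.map f.op y' = y) : R.plus f := by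
  obtain ⟨e, g, h, hg, hh, rfl⟩ := R.fact_exists f
  by_cases hg_id : ∃ w : d = e, g = eqToHom w
  · obtain ⟨rfl, rfl⟩ := hg_id
    simpa using hh
  · refine absurd ⟨e, g, X.map h.op y', hg, hg_id, ?_⟩ hy
    rw [← hf, op_comp, Functor.map_comp_apply]

variable {c d d' : C} {x : X.obj (op c)} {σ : c ⟶ d} {σ' : c ⟶ d'}
  {y : X.obj (op d)} {y' : X.obj (op d')}

lemma plus_section_comp (hy : ¬ Degenerate R X y) (hx : X.map σ.op y = x)
    (hx' : X.map σ'.op y' = x) {β : d ⟶ c} (hβ : β ≫ σ = 𝟙 d) : R.plus (β ≫ σ') := by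
  refine plus_of_map_apply_eq_not_degenerate (y' := y') hy ?_
  rw [op_comp, Functor.map_comp_apply, hx', ← hx, map_map_of_section_apply hβ]

lemma eq_of_not_degenerate
    (hEZ1 : ∀ {c d : C} (σ : c ⟶ d), R.minus σ → ∃ β : d ⟶ c, β ≫ σ = 𝟙 d)
    (hEZ2 : ∀ {c d : C} (σ σ' : c ⟶ d), R.minus σ → R.minus σ' →
      ({β : d ⟶ c | β ≫ σ = 𝟙 d} = {β : d ⟶ c | β ≫ σ' = 𝟙 d}) → σ = σ')
    (hσ : R.minus σ) (hσ' : R.minus σ')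
    (hy : ¬ Degenerate R X y) (hy' : ¬ Degenerate R X y')
    (hx : X.map σ.op y = x) (hx' : X.map σ'.op y' = x) :
    (⟨d, σ, y⟩ : Σ e : C, (c ⟶ e) × X.obj (op e)) = ⟨d', σ', y'⟩ := by
  obtain ⟨β, hβ⟩ := hEZ1 σ hσ
  obtain ⟨β', hβ'⟩ := hEZ1 σ' hσ'
  obtain rfl : d = d' := R.eq_of_plus_of_plus (plus_section_comp hy hx hx' hβ)
    (plus_section_comp hy' hx' hx hβ')
  obtain rfl : σ = σ' := hEZ2 σ σ' hσ hσ' <| Set.ext fun γ =>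
    ⟨fun hγ => R.eq_id_of_plus (plus_section_comp hy hx hx' hγ),
      fun hγ => R.eq_id_of_plus (plus_section_comp hy' hx' hx hγ)⟩
  obtain rfl : y = y' := by
    rw [← map_map_of_section_apply hβ y, ← map_map_of_section_apply hβ y', hx, hx']
  rfl

end ReedyStruct

/-- Every EZ-Reedy category is elegant: if every map of `C⁻` has a section, and two
parallel maps of `C⁻` with the same set of sections are equal, then every point of every
presheaf on `C` is uniquely a degeneracy of a unique non-degenerate point. -/
theorem ez_implies_elegant (R : ReedyStruct C)
    (hEZ1 : ∀ {c d : C} (σ : c ⟶ d), R.minus σ → ∃ β : d ⟶ c, β ≫ σ = 𝟙 d)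
    (hEZ2 : ∀ {c d : C} (σ σ' : c ⟶ d), R.minus σ → R.minus σ' →
      ({β : d ⟶ c | β ≫ σ = 𝟙 d} = {β : d ⟶ c | β ≫ σ' = 𝟙 d}) → σ = σ') :
    Elegant R := by
  intro X c x
  obtain ⟨d, σ, y, hσ, hy, hx⟩ := ReedyStruct.exists_minus_not_degenerate (R := R) x
  refine ⟨⟨d, σ, y⟩, ⟨hσ, hy, hx⟩, ?_⟩
  rintro ⟨d', σ', y'⟩ ⟨hσ', hy', hx'⟩
  exact ReedyStruct.eq_of_not_degenerate hEZ1 hEZ2 hσ' hσ hy' hy hx' hx
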